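/- arXiv:2305.07924 — 2 statements merged into one kernel-verified Lean document; each statement's English description precedes it below -/
import Mathlib

section
/- Let N ≥ 1 be a natural number, let T : ℝ^N → ℝ^N be the cyclic coordinate permutation T(x)_i = x_{i+1 mod N}, let w = exp(2πi/N), let s₁ : ℝ^N → ℂ be infinitely differentiable (C^∞), set s_j = s₁ ∘ T^{j-1} for j = 1,…,N, and assume Σ_{j=1}^N |s_j(x)|² = 1 for every x ∈ ℝ^N. For j ∈ {1,…,N} define (P_j f)(x) = conj(s_j(x)) · Σ_{τ=0}^{N-1} conj(w^{τ j}) · s_j(T^τ x) · f(T^τ x). Then for every f ∈ L²(ℝ^N) the function P_j f again lies in L²(ℝ^N), and P_j is self-adjoint: ⟨P_j f, g⟩_{L²} = ⟨f, P_j g⟩_{L²} for all f, g ∈ L²(ℝ^N). -/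
open MeasureTheory Complex

/-- The cyclic coordinate permutation `T` on `ℝ^N`, `T(x)_i = x_{i+1 mod N}`. -/
noncomputable def cyc (N : ℕ) [NeZero N] : (Fin N → ℝ) → (Fin N → ℝ) :=
  fun x i => x (i + 1)

/-- The `N`-th root of unity `w = exp(2πi/N)`. -/
noncomputable def rootN (N : ℕ) : ℂ := Complex.exp (2 * Real.pi * Complex.I / N)

/-- The operator `(P_j f)(x) = conj(s_j(x)) · Σ_{τ=0}^{N-1} conj(w^{τj}) s_j(T^τ x) f(T^τ x)`. -/
noncomputable def Pop (N : ℕ) [NeZero N] (s : ℕ → (Fin N → ℝ) → ℂ) (j : ℕ)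
    (f : (Fin N → ℝ) → ℂ) : (Fin N → ℝ) → ℂ :=
  fun x => (starRingEnd ℂ) (s j x) *
    ∑ τ ∈ Finset.range N,
      (starRingEnd ℂ) ((rootN N) ^ (τ * j)) * s j ((cyc N)^[τ] x) * f ((cyc N)^[τ] x)

section aux
variable (N : ℕ) [NeZero N]
open Fin.NatCast Fin.CommRing

lemma cyc_iterate (τ : ℕ) (x : Fin N → ℝ) (i : Fin N) :
    (cyc N)^[τ] x i = x (i + τ) := by
  induction τ generalizing i with
  | zero => simp
  | succ n ih =>
    rw [Function.iterate_succ_apply']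
    simp only [cyc, ih]
    congr 1
    push_cast
    ring

lemma cyc_iter_eq (τ : ℕ) :
    (cyc N)^[τ] = ⇑(MeasurableEquiv.piCongrLeft (fun _ => ℝ)
      (Equiv.addRight ((τ : Fin N))).symm) := by
  funext x i
  simp [cyc_iterate, MeasurableEquiv.piCongrLeft, Equiv.piCongrLeft]

lemma mp_cyc_iter (τ : ℕ) : MeasurePreserving ((cyc N)^[τ]) volume volume := by
  rw [cyc_iter_eq]; exact volume_measurePreserving_piCongrLeft _ _

lemma emb_cyc_iter (τ : ℕ) : MeasurableEmbedding ((cyc N)^[τ]) := by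
  rw [cyc_iter_eq]; exact (MeasurableEquiv.piCongrLeft _ _).measurableEmbedding

lemma cont_cyc_iter (τ : ℕ) : Continuous ((cyc N)^[τ]) :=
  (continuous_pi fun _ => continuous_apply _ : Continuous (cyc N)).iterate τ

lemma cyc_iter_cancel {τ σ : ℕ} (h : (τ + σ) % N = 0) (x : Fin N → ℝ) :
    (cyc N)^[τ] ((cyc N)^[σ] x) = x := by
  funext i
  rw [cyc_iterate, cyc_iterate]
  congr 1
  have h1 : ((τ : Fin N) + (σ : Fin N)) = (((τ + σ : ℕ)) : Fin N) := by push_cast; ring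
  rw [add_assoc, h1]
  have h2 : (((τ + σ : ℕ)) : Fin N) = 0 := by
    rw [show ((τ + σ : ℕ) : Fin N) = Fin.ofNat N (τ + σ) from rfl]
    simp [Fin.ofNat, h]
  rw [h2, add_zero]

lemma rootN_pow_N : (rootN N) ^ N = 1 := by
  have hN : (N : ℂ) ≠ 0 := Nat.cast_ne_zero.mpr (NeZero.ne N)
  rw [rootN, ← Complex.exp_nat_mul]
  rw [show (N : ℂ) * (2 * Real.pi * Complex.I / N) = 2 * Real.pi * Complex.I by
    field_simp]
  exact Complex.exp_two_pi_mul_I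

lemma normSq_rootN_pow (k : ℕ) : (starRingEnd ℂ) ((rootN N) ^ k) * (rootN N) ^ k = 1 := by
  rw [Complex.conj_mul']
  have : ‖rootN N‖ = 1 := by
    rw [rootN, Complex.norm_exp]
    norm_num [Complex.div_re]
  rw [norm_pow, this]
  norm_num

lemma conj_rootN_pow {τ σ : ℕ} (h : (τ + σ) % N = 0) (j : ℕ) :
    (starRingEnd ℂ) ((rootN N) ^ (τ * j)) = (rootN N) ^ (σ * j) := by
  have h1 : (rootN N) ^ (τ * j) * (rootN N) ^ (σ * j) = 1 := by
    rw [← pow_add, ← add_mul]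
    obtain ⟨k, hk⟩ := Nat.dvd_of_mod_eq_zero h
    rw [hk, mul_assoc, pow_mul, rootN_pow_N]
    simp
  calc (starRingEnd ℂ) ((rootN N) ^ (τ * j))
      = (starRingEnd ℂ) ((rootN N) ^ (τ * j)) * ((rootN N) ^ (τ * j) * (rootN N) ^ (σ * j)) := by
        rw [h1, mul_one]
    _ = ((starRingEnd ℂ) ((rootN N) ^ (τ * j)) * (rootN N) ^ (τ * j)) * (rootN N) ^ (σ * j) := by
        ring
    _ = (rootN N) ^ (σ * j) := by rw [normSq_rootN_pow]; ring

end aux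

section aux2
variable {N : ℕ} [NeZero N]

lemma integrable_bdd_mul_L2 {φ f g : (Fin N → ℝ) → ℂ}
    (hφm : AEStronglyMeasurable φ volume) (C : ℝ) (hφb : ∀ x, ‖φ x‖ ≤ C)
    (hf : MemLp f 2 volume) (hg : MemLp g 2 volume) :
    Integrable (fun x => φ x * (f x * g x)) volume := by
  have hfg : MemLp (fun x => f x * g x) 1 volume := by
    have := (MemLp.smul hg hf (p := 2) (q := 2) (r := 1) (hpqr := ⟨by simp [ENNReal.inv_two_add_inv_two]⟩) :
      MemLp (f • g) 1 volume)
    simpa [Pi.smul_apply, smul_eq_mul, Pi.mul_def] using this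
  have hφ : MemLp φ ⊤ volume := memLp_top_of_bound hφm C (Filter.Eventually.of_forall hφb)
  have := (MemLp.smul hfg hφ :
    MemLp (φ • fun x => f x * g x) 1 volume)
  rw [← memLp_one_iff_integrable]
  simpa [Pi.smul_apply, smul_eq_mul, Pi.mul_def] using this

lemma memℒp_bdd_mul {φ f : (Fin N → ℝ) → ℂ}
    (hφm : AEStronglyMeasurable φ volume) (C : ℝ) (hφb : ∀ x, ‖φ x‖ ≤ C)
    (hf : MemLp f 2 volume) :
    MemLp (fun x => φ x * f x) 2 volume := by
  have hφ : MemLp φ ⊤ volume := memLp_top_of_bound hφm C (Filter.Eventually.of_forall hφb)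
  have := (MemLp.smul hf hφ : MemLp (φ • f) 2 volume)
  simpa [Pi.smul_apply, smul_eq_mul, Pi.mul_def] using this

end aux2

/-- `P_j` maps `L²(ℝ^N)` to itself and is self-adjoint. -/
theorem stmt0 (N : ℕ) [NeZero N]
    (s₁ : (Fin N → ℝ) → ℂ) (hs₁ : ContDiff ℝ (⊤ : ℕ∞) s₁)
    (s : ℕ → (Fin N → ℝ) → ℂ)
    (hsdef : ∀ j, 1 ≤ j → s j = s₁ ∘ (cyc N)^[j - 1])
    (hsum : ∀ x, ∑ j ∈ Finset.Icc 1 N, ‖s j x‖ ^ 2 = 1)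
    (j : ℕ) (hj : j ∈ Finset.Icc 1 N) :
    (∀ f : (Fin N → ℝ) → ℂ, MemLp f 2 volume → MemLp (Pop N s j f) 2 volume) ∧
    (∀ f g : (Fin N → ℝ) → ℂ, MemLp f 2 volume → MemLp g 2 volume →
      ∫ x, Pop N s j f x * (starRingEnd ℂ) (g x) =
        ∫ x, f x * (starRingEnd ℂ) (Pop N s j g x)) := by
  obtain ⟨hj1, hjN⟩ := Finset.mem_Icc.mp hj
  -- continuity of s j
  have hcont : Continuous (s j) := by
    rw [hsdef j hj1]
    exact hs₁.continuous.comp (cont_cyc_iter N _)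
  -- bound on s j
  have hbnd : ∀ x, ‖s j x‖ ≤ 1 := by
    intro x
    have h1 : ‖s j x‖ ^ 2 ≤ 1 := by
      rw [← hsum x]
      exact Finset.single_le_sum (f := fun i => ‖s i x‖ ^ 2)
        (fun i _ => by positivity) hj
    have := norm_nonneg (s j x)
    nlinarith
  -- the summand coefficient functions are bounded measurable
  have hφm : ∀ τ : ℕ, AEStronglyMeasurable
      (fun x => (starRingEnd ℂ) ((rootN N) ^ (τ * j)) * s j ((cyc N)^[τ] x)) volume :=
    fun τ => ((continuous_const.mul (hcont.comp (cont_cyc_iter N τ))).aestronglyMeasurable)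
  have habsw : ∀ k : ℕ, ‖(rootN N) ^ k‖ = 1 := by
    intro k
    have : ‖rootN N‖ = 1 := by
      rw [rootN, Complex.norm_exp]
      norm_num [Complex.div_re]
    rw [norm_pow, this, one_pow]
  have hφb : ∀ τ x, ‖(starRingEnd ℂ) ((rootN N) ^ (τ * j)) * s j ((cyc N)^[τ] x)‖ ≤ 1 := by
    intro τ x
    rw [norm_mul, RCLike.norm_conj, habsw, one_mul]
    exact hbnd _
  -- MemLp of summands
  have hsummand : ∀ (f : (Fin N → ℝ) → ℂ), MemLp f 2 volume → ∀ τ : ℕ,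
      MemLp (fun x => (starRingEnd ℂ) ((rootN N) ^ (τ * j)) * s j ((cyc N)^[τ] x)
        * f ((cyc N)^[τ] x)) 2 volume := by
    intro f hf τ
    have hfc : MemLp (fun x => f ((cyc N)^[τ] x)) 2 volume :=
      hf.comp_measurePreserving (mp_cyc_iter N τ)
    have := memℒp_bdd_mul (hφm τ) 1 (hφb τ) hfc
    simpa [mul_assoc] using this
  have hmem : ∀ (f : (Fin N → ℝ) → ℂ), MemLp f 2 volume → MemLp (Pop N s j f) 2 volume := by
    intro f hf
    have hsum2 : MemLp (fun x => ∑ τ ∈ Finset.range N,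
        (starRingEnd ℂ) ((rootN N) ^ (τ * j)) * s j ((cyc N)^[τ] x) * f ((cyc N)^[τ] x))
        2 volume :=
      memLp_finsetSum _ (fun τ _ => hsummand f hf τ)
    have hc : AEStronglyMeasurable (fun x => (starRingEnd ℂ) (s j x)) volume :=
      (Complex.continuous_conj.comp hcont).aestronglyMeasurable
    have hb : ∀ x, ‖(starRingEnd ℂ) (s j x)‖ ≤ 1 := fun x => by
      rw [RCLike.norm_conj]; exact hbnd x
    exact memℒp_bdd_mul hc 1 hb hsum2
  -- conj preserves MemLp
  have memconj : ∀ (g : (Fin N → ℝ) → ℂ), MemLp g 2 volume →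
      MemLp (fun x => (starRingEnd ℂ) (g x)) 2 volume := fun g hg =>
    hg.of_le (Complex.continuous_conj.comp_aestronglyMeasurable hg.1)
      (Filter.Eventually.of_forall fun x => by simp)
  refine ⟨hmem, ?_⟩
  intro f g hf hg
  set w : ℂ := rootN N with hw
  set T : (Fin N → ℝ) → (Fin N → ℝ) := cyc N with hT
  set A : ℕ → (Fin N → ℝ) → ℂ := fun τ x =>
    (starRingEnd ℂ) (s j x) *
      ((starRingEnd ℂ) (w ^ (τ * j)) * s j (T^[τ] x) * f (T^[τ] x)) *
      (starRingEnd ℂ) (g x) with hA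
  set B : ℕ → (Fin N → ℝ) → ℂ := fun σ x =>
    f x * (starRingEnd ℂ) ((starRingEnd ℂ) (s j x) *
      ((starRingEnd ℂ) (w ^ (σ * j)) * s j (T^[σ] x) * g (T^[σ] x))) with hB
  -- integrability
  have hintA : ∀ τ : ℕ, Integrable (A τ) volume := by
    intro τ
    have hfc : MemLp (fun x => f (T^[τ] x)) 2 volume :=
      hf.comp_measurePreserving (mp_cyc_iter N τ)
    have hgc : MemLp (fun x => (starRingEnd ℂ) (g x)) 2 volume := memconj g hg
    have hφm' : AEStronglyMeasurable
        (fun x => (starRingEnd ℂ) (s j x) * ((starRingEnd ℂ) (w ^ (τ * j)) * s j (T^[τ] x)))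
        volume :=
      ((Complex.continuous_conj.comp hcont).mul
        (continuous_const.mul (hcont.comp (cont_cyc_iter N τ)))).aestronglyMeasurable
    have hφb' : ∀ x, ‖(starRingEnd ℂ) (s j x) *
        ((starRingEnd ℂ) (w ^ (τ * j)) * s j (T^[τ] x))‖ ≤ 1 := by
      intro x
      rw [norm_mul, norm_mul, RCLike.norm_conj, RCLike.norm_conj, habsw, one_mul]
      calc ‖s j x‖ * ‖s j (T^[τ] x)‖ ≤ 1 * 1 :=
        mul_le_mul (hbnd x) (hbnd _) (norm_nonneg _) zero_le_one
      _ = 1 := one_mul 1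
    exact (integrable_bdd_mul_L2 hφm' 1 hφb' hfc hgc).congr
      (Filter.Eventually.of_forall fun x => by simp only [hA]; ring)
  have hintB : ∀ σ : ℕ, Integrable (B σ) volume := by
    intro σ
    have hgc : MemLp (fun x => (starRingEnd ℂ) (g (T^[σ] x))) 2 volume :=
      (memconj g hg).comp_measurePreserving (mp_cyc_iter N σ)
    have hφm' : AEStronglyMeasurable
        (fun x => s j x * (w ^ (σ * j) * (starRingEnd ℂ) (s j (T^[σ] x)))) volume :=
      (hcont.mul (continuous_const.mul
        (Complex.continuous_conj.comp (hcont.comp (cont_cyc_iter N σ))))).aestronglyMeasurable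
    have hφb' : ∀ x, ‖s j x * (w ^ (σ * j) * (starRingEnd ℂ) (s j (T^[σ] x)))‖ ≤ 1 := by
      intro x
      rw [norm_mul, norm_mul, RCLike.norm_conj, habsw, one_mul]
      calc ‖s j x‖ * ‖s j (T^[σ] x)‖ ≤ 1 * 1 :=
        mul_le_mul (hbnd x) (hbnd _) (norm_nonneg _) zero_le_one
      _ = 1 := one_mul 1
    exact (integrable_bdd_mul_L2 hφm' 1 hφb' hf hgc).congr
      (Filter.Eventually.of_forall fun x => by
        simp only [hB, map_mul, Complex.conj_conj]; ring)
  -- per-term change of variables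
  have claim : ∀ τ ∈ Finset.range N, ∫ x, A τ x = ∫ x, B ((N - τ) % N) x := by
    intro τ hτ
    rw [Finset.mem_range] at hτ
    set σ := (N - τ) % N with hσdef
    have hσ : (τ + σ) % N = 0 := by
      rcases Nat.eq_zero_or_pos τ with h0 | h0
      · subst h0; simp [hσdef, Nat.mod_self]
      · have : σ = N - τ := Nat.mod_eq_of_lt (by omega)
        rw [this]
        have : τ + (N - τ) = N := by omega
        rw [this, Nat.mod_self]
    have step : ∫ x, A τ x = ∫ x, A τ (T^[σ] x) :=
      ((mp_cyc_iter N σ).integral_comp (emb_cyc_iter N σ) (A τ)).symm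
    rw [step]
    apply integral_congr_ae
    filter_upwards with x
    simp only [hA, hB, ← Function.iterate_add_apply]
    rw [show T^[τ + σ] x = x from by
        rw [hT, Function.iterate_add_apply]; exact cyc_iter_cancel N hσ x,
      show (starRingEnd ℂ) (w ^ (τ * j)) = w ^ (σ * j) from conj_rootN_pow N hσ j]
    simp only [map_mul, Complex.conj_conj]
    ring
  -- reindexing
  have reindex : ∑ τ ∈ Finset.range N, ∫ x, B ((N - τ) % N) x
      = ∑ σ ∈ Finset.range N, ∫ x, B σ x := by
    have hNpos : 0 < N := Nat.pos_of_ne_zero (NeZero.ne N)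
    have hmem' : ∀ a ∈ Finset.range N, (N - a) % N ∈ Finset.range N :=
      fun a _ => Finset.mem_range.mpr (Nat.mod_lt _ hNpos)
    have hinv : ∀ a ∈ Finset.range N, (N - (N - a) % N) % N = a := by
      intro a ha
      rw [Finset.mem_range] at ha
      rcases Nat.eq_zero_or_pos a with h0 | h0
      · subst h0; simp [Nat.mod_self]
      · have h1 : (N - a) % N = N - a := Nat.mod_eq_of_lt (by omega)
        rw [h1, Nat.sub_sub_self (le_of_lt ha), Nat.mod_eq_of_lt ha]
    exact Finset.sum_nbij' (fun τ => (N - τ) % N) (fun σ => (N - σ) % N)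
      hmem' hmem' hinv hinv (fun a _ => rfl)
  calc ∫ x, Pop N s j f x * (starRingEnd ℂ) (g x)
      = ∫ x, ∑ τ ∈ Finset.range N, A τ x := by
        apply integral_congr_ae
        filter_upwards with x
        simp only [Pop, Finset.mul_sum, Finset.sum_mul, hA, ← hw, ← hT]
    _ = ∑ τ ∈ Finset.range N, ∫ x, A τ x :=
        integral_finset_sum _ (fun τ _ => hintA τ)
    _ = ∑ τ ∈ Finset.range N, ∫ x, B ((N - τ) % N) x :=
        Finset.sum_congr rfl claim
    _ = ∑ σ ∈ Finset.range N, ∫ x, B σ x := reindex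
    _ = ∫ x, ∑ σ ∈ Finset.range N, B σ x :=
        (integral_finset_sum _ (fun σ _ => hintB σ)).symm
    _ = ∫ x, f x * (starRingEnd ℂ) (Pop N s j g x) := by
        apply integral_congr_ae
        filter_upwards with x
        simp only [Pop, map_mul, map_sum, Finset.mul_sum, hB, ← hw, ← hT]
end

section
/- Let N ≥ 1 be a natural number, w = exp(2πi/N), and s ∈ {1,…,N}. Let x be the sequence with x_s = 1 and x_i = 0 for i ≠ s. Let U be the N × N matrix with entries U_{jk} = (1/√N) · w^{(k−1)·j} for j,k ∈ {1,…,N}, and let F be the N × N matrix with entries F_{jk} = x_{(j+k−1) mod N} (index reduced cyclically into {1,…,N}). Let u ∈ ℂ^N be the uniform superposition vector with every entry equal to 1/√N. Then F(Uu) = e_j, where j ∈ {1,…,N} is the unique index with j ≡ s + 1 (mod N) and e_j is the j-th standard basis vector of ℂ^N; in particular, the marked position s is recovered from the measured index j as the unique element of {1,…,N} congruent to j − 1 modulo N. -/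
/-!
Row `j` of `U` sums the powers of `w ^ (j + 1)`, which vanishes unless `w ^ (j + 1) = 1`, i.e. unless
`j` is the last index; so `U u = e_N`. Hence `F (U u)` is the last column of `F`, whose `i`-th entry is
`x_{(i + N - 1) mod N + 1}`, and this is `1` exactly when `i ≡ s (mod N)`.
-/

open Complex

open Matrix Finset

theorem IsPrimitiveRoot.sum_pow_mul_succ {K : Type*} [Field K] {ζ : K} {n : ℕ}
    (hζ : IsPrimitiveRoot ζ (n + 1)) (i : Fin (n + 1)) :
    ∑ k : Fin (n + 1), ζ ^ (k.val * (i.val + 1)) = if i = Fin.last n then (n + 1 : K) else 0 := by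
  simp_rw [pow_mul', Fin.sum_univ_eq_sum_range (fun k => (ζ ^ (i.val + 1)) ^ k)]
  split_ifs with hi
  · simp [hi, hζ.pow_eq_one]
  · have hne : ζ ^ (i.val + 1) ≠ 1 :=
      hζ.pow_ne_one_of_pos_of_lt i.val.succ_ne_zero (by simpa [Fin.ext_iff] using Fin.val_lt_last hi)
    rw [geom_sum_eq hne, ← pow_mul, mul_comm, pow_mul, hζ.pow_eq_one, one_pow, sub_self, zero_div]

theorem mulVec_const_eq_single_last {K : Type*} [Field K] {ζ c : K} {n : ℕ}
    (hζ : IsPrimitiveRoot ζ (n + 1)) (hc : c * c * (n + 1) = 1)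
    (U : Matrix (Fin (n + 1)) (Fin (n + 1)) K) (hU : ∀ j k, U j k = c * ζ ^ (k.val * (j.val + 1))) :
    U *ᵥ (fun _ => c) = Pi.single (Fin.last n) 1 := by
  ext i
  simp only [mulVec, dotProduct, hU, mul_right_comm _ _ c, ← Finset.mul_sum, hζ.sum_pow_mul_succ,
    Pi.single_apply]
  split_ifs <;> simp [hc]

theorem Nat.add_mod_succ_add_one_eq_iff {n i s : ℕ} (hi : i < n + 1) (hs : s ∈ Icc 1 (n + 1)) :
    (i + n) % (n + 1) + 1 = s ↔ i ≡ s [MOD n + 1] := by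
  obtain ⟨hs1, hsn⟩ := Finset.mem_Icc.mp hs
  have hmod : (i + n) % (n + 1) = if i = 0 then n else i - 1 := by
    split_ifs with h0
    · simp [h0]
    · rw [show i + n = i - 1 + (n + 1) by omega, Nat.add_mod_right, Nat.mod_eq_of_lt (by omega)]
  have hsmod : s % (n + 1) = if s = n + 1 then 0 else s := by
    split_ifs with h
    · simp [h]
    · exact Nat.mod_eq_of_lt (by omega)
  rw [hmod, Nat.ModEq, Nat.mod_eq_of_lt hi, hsmod]
  split_ifs <;> omega

theorem mulVec_single_last_of_cyclic {R : Type*} [Semiring R] {n s : ℕ} (hs : s ∈ Icc 1 (n + 1))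
    {x : ℕ → R} (hx : ∀ i, x i = if i = s then 1 else 0)
    (F : Matrix (Fin (n + 1)) (Fin (n + 1)) R) (hF : ∀ j k, F j k = x ((j.val + k.val) % (n + 1) + 1))
    {j : Fin (n + 1)} (hj : j.val ≡ s [MOD n + 1]) :
    F *ᵥ Pi.single (Fin.last n) 1 = Pi.single j 1 := by
  ext i
  have hij : i = j ↔ i.val ≡ s [MOD n + 1] := by
    rw [Fin.ext_iff, Nat.ModEq, ← hj, Nat.mod_eq_of_lt i.isLt, Nat.mod_eq_of_lt j.isLt]
  rw [mulVec_single_one, col_apply, hF, hx, Fin.val_last, Pi.single_apply]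
  exact if_congr ((Nat.add_mod_succ_add_one_eq_iff i.isLt hs).trans hij.symm) rfl rfl

theorem stmt10_general (N : ℕ) (s : ℕ) (hs : s ∈ Finset.Icc 1 N)
    (x : ℕ → ℂ) (hx : ∀ i, x i = if i = s then 1 else 0)
    (U : Matrix (Fin N) (Fin N) ℂ)
    (hU : ∀ j k : Fin N,
      U j k = (1 / (Real.sqrt N : ℂ)) * (rootN N) ^ (k.val * (j.val + 1)))
    (F : Matrix (Fin N) (Fin N) ℂ)
    (hF : ∀ j k : Fin N, F j k = x ((j.val + k.val) % N + 1))
    (u : Fin N → ℂ) (hu : ∀ i, u i = 1 / (Real.sqrt N : ℂ)) :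
    ∀ j : Fin N, ((j.val : ℤ) + 1) ≡ (s : ℤ) + 1 [ZMOD (N : ℤ)] →
      (F.mulVec (U.mulVec u) = fun i => if i = j then 1 else 0) ∧
      (s : ℤ) ≡ ((j.val : ℤ) + 1) - 1 [ZMOD (N : ℤ)] := by
  intro j hj
  have hjs : (j.val : ℤ) ≡ s [ZMOD N] := Int.ModEq.add_right_cancel' 1 hj
  refine ⟨?_, by simpa using hjs.symm⟩
  obtain ⟨n, rfl⟩ : ∃ n, N = n + 1 := Nat.exists_eq_succ_of_ne_zero (by
    have := Finset.mem_Icc.mp hs; omega)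
  have hζ : IsPrimitiveRoot (rootN (n + 1)) (n + 1) := Complex.isPrimitiveRoot_exp _ n.succ_ne_zero
  have hc : 1 / (Real.sqrt (n + 1 : ℕ) : ℂ) * (1 / (Real.sqrt (n + 1 : ℕ) : ℂ)) * (n + 1) = 1 := by
    rw [div_mul_div_comm, one_mul, ← ofReal_mul, Real.mul_self_sqrt (Nat.cast_nonneg _)]
    push_cast
    field_simp
  rw [show u = fun _ => _ from funext hu, mulVec_const_eq_single_last hζ hc U hU,
    mulVec_single_last_of_cyclic hs hx F hF (Int.natCast_modEq_iff.mp hjs)]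
  ext i
  exact Pi.single_apply j 1 i

/-- running QCPA on the uniform superposition `u = (1/√N,…,1/√N)ᵀ`
yields `F(Uu) = e_j` where `j ≡ s + 1 (mod N)`; in particular the marked position
`s` is the unique element of `{1,…,N}` congruent to `j - 1` modulo `N`. -/
theorem stmt10 (N : ℕ) [NeZero N] (s : ℕ) (hs : s ∈ Finset.Icc 1 N)
    (x : ℕ → ℂ) (hx : ∀ i, x i = if i = s then 1 else 0)
    (U : Matrix (Fin N) (Fin N) ℂ)
    (hU : ∀ j k : Fin N,
      U j k = (1 / (Real.sqrt N : ℂ)) * (rootN N) ^ (k.val * (j.val + 1)))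
    (F : Matrix (Fin N) (Fin N) ℂ)
    (hF : ∀ j k : Fin N, F j k = x ((j.val + k.val) % N + 1))
    (u : Fin N → ℂ) (hu : ∀ i, u i = 1 / (Real.sqrt N : ℂ)) :
    ∀ j : Fin N, ((j.val : ℤ) + 1) ≡ (s : ℤ) + 1 [ZMOD (N : ℤ)] →
      (F.mulVec (U.mulVec u) = fun i => if i = j then 1 else 0) ∧
      (s : ℤ) ≡ ((j.val : ℤ) + 1) - 1 [ZMOD (N : ℤ)] :=
  stmt10_general N s hs x hx U hU F hF u hu
end
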